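/- Let (𝒳, Σ) be a measurable space, μ a probability measure on 𝒳, κ a Markov kernel from 𝒳 to ℝ (Borel σ-algebra), π = μ ⊗ₘ κ the composition-product probability measure on 𝒳 × ℝ, and f : 𝒳 → ℝ a bounded measurable function. For n ∈ ℕ and y ∈ ℝ define the fixed-resolution posterior mean gₙ(y) = (∫_𝒳 f(x)·κ(x, Iₙ(y)) dμ(x)) / (∫_𝒳 κ(x, Iₙ(y)) dμ(x)). Then for π-almost every (x, y) ∈ 𝒳 × ℝ: the denominators ∫_𝒳 κ(x', Iₙ(y)) dμ(x') are strictly positive for every n, and gₙ(y) converges as n → ∞ to the conditional expectation of f ∘ fst given the σ-algebra generated by the second projection, evaluated at (x, y); i.e., gₙ(y) → E_π[f(X) | Y](x, y) π-almost everywhere. -/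

import Mathlib

open MeasureTheory ProbabilityTheory Filter Topology

/-- The dyadic discretization `αₙ(y) = 2^(-n) * ⌈2^n * y⌉`. -/
noncomputable def dyadApprox (n : ℕ) (y : ℝ) : ℝ :=
  (2 : ℝ) ^ (-(n : ℤ)) * (⌈(2 : ℝ) ^ n * y⌉ : ℝ)

/-- The dyadic cell `Iₙ(y) = (αₙ(y) - 2^(-n), αₙ(y)]`. -/
noncomputable def dyadCell (n : ℕ) (y : ℝ) : Set ℝ :=
  Set.Ioc (dyadApprox n y - (2 : ℝ) ^ (-(n : ℤ))) (dyadApprox n y)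

/-! At resolution `n` the posterior mean at `(x, y)` is the `π`-average of `f ∘ fst` over the slab
`𝒳 × Iₙ(y)`, and these slabs are the fibres of the countably-valued map `(x, y) ↦ ⌈2ⁿ y⌉`.
Fibre averages of a countably-valued map are a version of the conditional expectation given that
map, since the conditional expectation is constant on fibres; and almost every point lies in a
fibre of positive mass, which gives the positive denominators. The dyadic cells are nested and
shrink to points, so these σ-algebras form a filtration generating the σ-algebra of the second
coordinate, and Lévy's upward theorem gives the almost sure convergence. -/

section CountablyValued

variable {Ω ι : Type*} [MeasurableSpace Ω] [MeasurableSpace ι] [Countable ι]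
  [MeasurableSingletonClass ι] {μ : Measure Ω} {g : Ω → ι}

theorem ae_measure_preimage_singleton_ne_zero (hg : Measurable g) :
    ∀ᵐ ω ∂μ, μ (g ⁻¹' {g ω}) ≠ 0 := by
  have h : ∀ᵐ i ∂μ.map g, μ.map g {i} ≠ 0 := ae_iff_of_countable.2 fun _ h => h
  filter_upwards [ae_of_ae_map hg.aemeasurable h] with ω hω
  rwa [Measure.map_apply hg (measurableSet_singleton _)] at hω

theorem condExp_comap_ae_eq_setIntegral_div [IsFiniteMeasure μ] (hg : Measurable g) {F : Ω → ℝ}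
    (hF : Integrable F μ) :
    μ[F | MeasurableSpace.comap g ‹_›] =ᵐ[μ]
      fun ω => (∫ ω' in g ⁻¹' {g ω}, F ω' ∂μ) / μ.real (g ⁻¹' {g ω}) := by
  have hm : MeasurableSpace.comap g ‹_› ≤ ‹MeasurableSpace Ω› := hg.comap_le
  have hfiber : (μ[F | MeasurableSpace.comap g ‹_›]).FactorsThrough g :=
    stronglyMeasurable_condExp.factorsThrough
  filter_upwards [ae_measure_preimage_singleton_ne_zero hg] with ω hω
  have hA : MeasurableSet[MeasurableSpace.comap g ‹_›] (g ⁻¹' {g ω}) :=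
    ⟨{g ω}, measurableSet_singleton _, rfl⟩
  have hpos : μ.real (g ⁻¹' {g ω}) ≠ 0 := ENNReal.toReal_ne_zero.2 ⟨hω, measure_ne_top _ _⟩
  rw [eq_div_iff hpos, ← setIntegral_condExp hm hF hA,
    setIntegral_congr_fun (hm _ hA) fun ω' hω' => hfiber hω', setIntegral_const, smul_eq_mul,
    mul_comm]

end CountablyValued

noncomputable def dyadIndex (n : ℕ) (y : ℝ) : ℤ := ⌈(2 : ℝ) ^ n * y⌉

theorem measurable_dyadIndex (n : ℕ) : Measurable (dyadIndex n) :=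
  (measurable_const_mul _).ceil

theorem dyadApprox_eq (n : ℕ) (y : ℝ) : dyadApprox n y = (2 : ℝ) ^ (-(n : ℤ)) * dyadIndex n y :=
  rfl

theorem mem_dyadCell_iff {n : ℕ} {y z : ℝ} : z ∈ dyadCell n y ↔ dyadIndex n z = dyadIndex n y := by
  have h2 : (0 : ℝ) < 2 ^ n := by positivity
  rw [dyadIndex, Int.ceil_eq_iff, dyadCell, dyadApprox_eq, Set.mem_Ioc, zpow_neg, zpow_natCast,
    ← mul_sub_one, inv_mul_lt_iff₀ h2, le_inv_mul_iff₀ h2]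

theorem dyadCell_eq_preimage (n : ℕ) (y : ℝ) : dyadCell n y = dyadIndex n ⁻¹' {dyadIndex n y} :=
  Set.ext fun _ => mem_dyadCell_iff

theorem measurableSet_dyadCell (n : ℕ) (y : ℝ) : MeasurableSet (dyadCell n y) := measurableSet_Ioc

theorem mem_dyadCell_self (n : ℕ) (y : ℝ) : y ∈ dyadCell n y := mem_dyadCell_iff.2 rfl

theorem dyadIndex_eq_of_succ (n : ℕ) (y : ℝ) : dyadIndex n y = -(-dyadIndex (n + 1) y / 2) := by
  have h : -((2 : ℝ) ^ n * y) = -((2 : ℝ) ^ (n + 1) * y) / (2 : ℤ) := by push_cast; ring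
  rw [dyadIndex, dyadIndex, ← Int.floor_neg, ← Int.floor_div_cast_of_nonneg zero_le_two, ← h,
    Int.floor_neg, neg_neg]

theorem tendsto_dyadApprox (y : ℝ) : Tendsto (fun n => dyadApprox n y) atTop (𝓝 y) := by
  have hlim : Tendsto (fun n : ℕ => y + (2 : ℝ) ^ (-(n : ℤ))) atTop (𝓝 y) := by
    simpa using tendsto_const_nhds.add (tendsto_pow_atTop_nhds_zero_of_lt_one (r := (2 : ℝ)⁻¹)
      (by norm_num) (by norm_num))
  refine tendsto_of_tendsto_of_tendsto_of_le_of_le tendsto_const_nhds hlim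
    (fun n => (mem_dyadCell_self n y).2) fun n => ?_
  have := (mem_dyadCell_self n y).1
  linarith

section DyadicFiltration

variable {Ω : Type*} [MeasurableSpace Ω] {X : Ω → ℝ}

noncomputable def dyadFiltration (hX : Measurable X) : Filtration ℕ ‹MeasurableSpace Ω› where
  seq n := MeasurableSpace.comap (dyadIndex n ∘ X) inferInstance
  mono' := monotone_nat_of_le_succ fun n => by
    have h : dyadIndex n ∘ X = (fun k : ℤ => -(-k / 2)) ∘ dyadIndex (n + 1) ∘ X :=
      funext fun ω => dyadIndex_eq_of_succ n (X ω)
    rw [h]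
    exact ((measurable_of_countable _).comp (comap_measurable (dyadIndex (n + 1) ∘ X))).comap_le
  le' n := ((measurable_dyadIndex n).comp hX).comap_le

theorem iSup_dyadFiltration (hX : Measurable X) :
    ⨆ n, dyadFiltration hX n = MeasurableSpace.comap X (borel ℝ) := by
  refine le_antisymm (iSup_le fun n => ?_) ?_
  · exact ((measurable_dyadIndex n).comp (comap_measurable X)).comap_le
  · have hApprox (n : ℕ) : Measurable[⨆ n, dyadFiltration hX n] fun ω => dyadApprox n (X ω) :=
      ((measurable_of_countable fun k : ℤ => (2 : ℝ) ^ (-(n : ℤ)) * k).comp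
        (comap_measurable (dyadIndex n ∘ X))).mono (le_iSup (dyadFiltration hX ·) n) le_rfl
    exact (@measurable_of_tendsto_metrizable _ _ (⨆ n, dyadFiltration hX n) _ _ _ _ _ _ hApprox
      (tendsto_pi_nhds.2 fun ω => tendsto_dyadApprox (X ω))).comap_le

theorem ae_tendsto_setIntegral_dyadCell_div_condExp {μ : Measure Ω} [IsFiniteMeasure μ]
    (hX : Measurable X) {F : Ω → ℝ} (hF : Integrable F μ) :
    ∀ᵐ ω ∂μ, Tendsto
      (fun n => (∫ ω' in X ⁻¹' dyadCell n (X ω), F ω' ∂μ) / μ.real (X ⁻¹' dyadCell n (X ω)))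
      atTop (𝓝 (μ[F | MeasurableSpace.comap X (borel ℝ)] ω)) := by
  have hcell n := condExp_comap_ae_eq_setIntegral_div ((measurable_dyadIndex n).comp hX) hF
  filter_upwards [tendsto_ae_condExp (ℱ := dyadFiltration hX) F, ae_all_iff.2 hcell]
    with ω hlim hcellω
  rw [iSup_dyadFiltration] at hlim
  simp only [dyadCell_eq_preimage]
  exact hlim.congr fun n => hcellω n

end DyadicFiltration

section CompProd

variable {α β : Type*} [MeasurableSpace α] [MeasurableSpace β] {μ : Measure α} [SFinite μ]
  {κ : Kernel α β} {A : Set β}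

theorem measureReal_compProd_preimage_snd [IsFiniteKernel κ] (hA : MeasurableSet A) :
    (μ ⊗ₘ κ).real (Prod.snd ⁻¹' A) = ∫ x, (κ x A).toReal ∂μ := by
  rw [measureReal_def, ← Set.univ_prod, Measure.compProd_apply_prod MeasurableSet.univ hA,
    Measure.restrict_univ, integral_toReal (κ.measurable_coe hA).aemeasurable
      (ae_of_all _ fun _ => measure_lt_top _ _)]

theorem MeasureTheory.Integrable.comp_fst_compProd [IsMarkovKernel κ] {f : α → ℝ}
    (hf : Integrable f μ) :
    Integrable (fun p => f p.1) (μ ⊗ₘ κ) := by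
  rw [← Measure.fst_compProd μ κ] at hf
  exact hf.comp_measurable measurable_fst

theorem setIntegral_compProd_preimage_snd [IsMarkovKernel κ] {f : α → ℝ} (hf : Integrable f μ)
    (hA : MeasurableSet A) :
    ∫ p in Prod.snd ⁻¹' A, f p.1 ∂(μ ⊗ₘ κ) = ∫ x, f x * (κ x A).toReal ∂μ := by
  rw [← Set.univ_prod, Measure.setIntegral_compProd MeasurableSet.univ hA
    hf.comp_fst_compProd.integrableOn, Measure.restrict_univ]
  simp only [setIntegral_const, smul_eq_mul, measureReal_def, mul_comm]

end CompProd

/-- Fixed-resolution posterior means computed on the dyadic cells `Iₙ(y)` converge,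
`π`-almost everywhere (`π = μ ⊗ₘ κ`), to the conditional expectation of `f ∘ fst`
given the second coordinate; moreover the normalizing denominators are a.e. positive. -/
theorem posterior_mean_dyadCell_tendsto_condexp
    {𝒳 : Type*} [MeasurableSpace 𝒳] (μ : Measure 𝒳) [IsProbabilityMeasure μ]
    (κ : Kernel 𝒳 ℝ) [IsMarkovKernel κ]
    (f : 𝒳 → ℝ) (hf : Measurable f) (hfbdd : ∃ C : ℝ, ∀ x, |f x| ≤ C) :
    ∀ᵐ p ∂(μ ⊗ₘ κ),
      (∀ n : ℕ, 0 < ∫ x', (κ x' (dyadCell n p.2)).toReal ∂μ) ∧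
      Tendsto
        (fun n : ℕ => (∫ x', f x' * (κ x' (dyadCell n p.2)).toReal ∂μ) /
          ∫ x', (κ x' (dyadCell n p.2)).toReal ∂μ)
        atTop
        (𝓝 (((μ ⊗ₘ κ)[(fun q : 𝒳 × ℝ => f q.1) |
          MeasurableSpace.comap (Prod.snd : 𝒳 × ℝ → ℝ) (borel ℝ)]) p)) := by
  obtain ⟨C, hC⟩ := hfbdd
  have hfi : Integrable f μ := .of_bound hf.aestronglyMeasurable C (ae_of_all _ hC)
  have hpos (n : ℕ) := ae_measure_preimage_singleton_ne_zero (μ := μ ⊗ₘ κ)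
    ((measurable_dyadIndex n).comp measurable_snd)
  filter_upwards [ae_all_iff.2 hpos,
    ae_tendsto_setIntegral_dyadCell_div_condExp measurable_snd hfi.comp_fst_compProd]
    with p hposp hlim
  simp only [← measureReal_compProd_preimage_snd (measurableSet_dyadCell _ _),
    ← setIntegral_compProd_preimage_snd hfi (measurableSet_dyadCell _ _)]
  refine ⟨fun n => ENNReal.toReal_pos ?_ (measure_ne_top _ _), hlim⟩
  rw [dyadCell_eq_preimage]
  exact hposp n
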